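/- arXiv:1411.3565 — 4 statements merged into one kernel-verified Lean document; each statement's English description precedes it below -/
import Mathlib

section
/- There exists a constant C > 0 such that for every real number d > 0, the d-chromatic number of the hyperbolic plane (the upper half-plane with its hyperbolic metric) satisfies χ(ℍ, d) ≤ C · e^d. -/
/-!
Cut `ℍ` into horizontal bands `e^{ks} ≤ im z < e^{(k+1)s}` with `s = d/2`, and cut the band `k`
into boxes of Euclidean width `s e^{ks}`. Each box has hyperbolic diameter `< d`, since it is
crossed by a horizontal move of length `< s` followed by a vertical one of length `< s`. Two
points at distance `d` lie at most two bands apart, and, when in the same band, fewer than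
`2e^d + 1` boxes apart, because `|z - w| = 2 sinh (d/2) √(im z im w)`. Colouring a box by its
band index mod `3` and its box index mod `⌈2e^d⌉ + 1` is therefore proper.
-/

open scoped ENNReal

/-- The distance-`d` graph of a (pseudo)metric space: vertices are the points of the space,
with an edge between two distinct points exactly when they are at distance `d`. -/
def distGraph (X : Type*) [PseudoMetricSpace X] (d : ℝ) : SimpleGraph X where
  Adj x y := x ≠ y ∧ dist x y = d
  symm := ⟨fun x y ⟨hxy, hd⟩ => ⟨hxy.symm, by rwa [dist_comm]⟩⟩
  loopless := ⟨fun x ⟨h, _⟩ => h rfl⟩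

open Real UpperHalfPlane

lemma Int.eq_of_intCast_zmod_eq_of_abs_sub_lt {a b : ℤ} {n : ℕ} (h : (a : ZMod n) = b)
    (hab : |a - b| < n) : a = b := by
  have := Int.eq_zero_of_abs_lt_dvd ((ZMod.intCast_eq_intCast_iff_dvd_sub b a n).mp h.symm) hab
  omega

lemma Int.abs_floor_sub_floor_lt {R : Type*} [CommRing R] [LinearOrder R] [IsStrictOrderedRing R]
    [FloorRing R] (a b : R) : |((⌊a⌋ - ⌊b⌋ : ℤ) : R)| < |a - b| + 1 := by
  have ha := Int.floor_le a
  have ha' := Int.lt_floor_add_one a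
  have hb := Int.floor_le b
  have hb' := Int.lt_floor_add_one b
  rw [Int.cast_sub, abs_sub_lt_iff]
  constructor <;> linarith [le_abs_self (a - b), neg_abs_le (a - b)]

theorem SimpleGraph.colorable_mul_of_abs_sub_lt {V : Type*} {G : SimpleGraph V} (row col : V → ℤ)
    {p q : ℕ} [NeZero p] [NeZero q] (hrow : ∀ ⦃x y⦄, G.Adj x y → |row x - row y| < p)
    (hcol : ∀ ⦃x y⦄, G.Adj x y → row x = row y → |col x - col y| < q)
    (hne : ∀ ⦃x y⦄, G.Adj x y → row x = row y → col x ≠ col y) : G.Colorable (p * q) := by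
  have := (SimpleGraph.Coloring.mk (fun x => ((row x : ZMod p), (col x : ZMod q)))
    fun {x y} hxy hc => by
      obtain ⟨hr, hc⟩ := Prod.ext_iff.mp hc
      have hr := Int.eq_of_intCast_zmod_eq_of_abs_sub_lt hr (hrow hxy)
      exact hne hxy hr (Int.eq_of_intCast_zmod_eq_of_abs_sub_lt hc (hcol hxy hr))).colorable
  simpa [ZMod.card] using this

namespace UpperHalfPlane

lemma dist_le_abs_re_sub_re_div_im_add (z w : ℍ) :
    dist z w ≤ |z.re - w.re| / z.im + |log z.im - log w.im| := by
  let z' : ℍ := ⟨⟨w.re, z.im⟩, z.im_pos⟩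
  have horiz : dist z z' ≤ |z.re - w.re| / z.im := by
    have hcoe : dist (z : ℂ) z' = |z.re - w.re| := by
      simp [Complex.dist_eq_re_im, z', Real.sqrt_sq_eq_abs]
    simpa [hcoe, z', Real.sqrt_mul_self z.im_pos.le] using dist_le_dist_coe_div_sqrt z z'
  have vert : dist z' w = |log z.im - log w.im| := dist_of_re_eq rfl
  linarith [dist_triangle z z' w]

lemma abs_re_sub_re_le (z w : ℍ) : |z.re - w.re| ≤ 2 * sinh (dist z w / 2) * √(z.im * w.im) := by
  have hcoe : 2 * sinh (dist z w / 2) * √(z.im * w.im) = dist (z : ℂ) w := by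
    rw [sinh_half_dist]; field_simp
  rw [hcoe, Complex.dist_eq]
  exact Complex.abs_re_le_norm (z - w)

noncomputable def tileRow (s : ℝ) (z : ℍ) : ℤ := ⌊log z.im / s⌋

noncomputable def tileCol (s : ℝ) (z : ℍ) : ℤ := ⌊z.re / (s * exp (tileRow s z * s))⌋

variable {s : ℝ}

lemma exp_tileRow_le_im (hs : 0 < s) (z : ℍ) : exp (tileRow s z * s) ≤ z.im := by
  rw [← le_log_iff_exp_le z.im_pos, ← le_div_iff₀ hs]
  exact Int.floor_le _

lemma im_lt_exp_tileRow_mul_exp (hs : 0 < s) (z : ℍ) :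
    z.im < exp (tileRow s z * s) * exp s := by
  rw [← exp_add, ← log_lt_iff_lt_exp z.im_pos, ← add_one_mul, ← div_lt_iff₀ hs]
  exact Int.lt_floor_add_one _

lemma abs_tileRow_sub_lt (hs : 0 < s) {z w : ℍ} (h : dist z w ≤ 2 * s) :
    |tileRow s z - tileRow s w| < 3 := by
  have hlog : |log z.im / s - log w.im / s| ≤ 2 := by
    rw [← sub_div, abs_div, abs_of_pos hs, div_le_iff₀ hs]
    exact (dist_log_im_le z w).trans h
  have hfloor := Int.abs_floor_sub_floor_lt (log z.im / s) (log w.im / s)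
  have : ((|tileRow s z - tileRow s w| : ℤ) : ℝ) < 3 := by
    push_cast at hfloor ⊢
    unfold tileRow
    linarith
  exact_mod_cast this

lemma abs_re_sub_lt_of_tileRow_eq (hs : 0 < s) {z w : ℍ} (hrow : tileRow s z = tileRow s w)
    (h : dist z w ≤ 2 * s) : |z.re - w.re| < (exp (2 * s) - 1) * exp (tileRow s z * s) := by
  set A := exp (tileRow s z * s)
  have hz := im_lt_exp_tileRow_mul_exp hs z
  have hw := im_lt_exp_tileRow_mul_exp hs w
  rw [← hrow] at hw
  have hsqrt : √(z.im * w.im) < A * exp s :=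
    (sqrt_lt' (by positivity)).2 (by nlinarith [z.im_pos, w.im_pos])
  calc |z.re - w.re| ≤ 2 * sinh (dist z w / 2) * √(z.im * w.im) := abs_re_sub_re_le z w
    _ ≤ 2 * sinh s * √(z.im * w.im) := by gcongr; exact sinh_le_sinh.2 (by linarith)
    _ < 2 * sinh s * (A * exp s) := by gcongr
    _ = (exp (2 * s) - 1) * A := by
      rw [sinh_eq, two_mul s, exp_add, exp_neg]; field_simp

lemma abs_tileCol_sub_lt (hs : 0 < s) {z w : ℍ} (hrow : tileRow s z = tileRow s w)
    (h : dist z w ≤ 2 * s) : ((|tileCol s z - tileCol s w| : ℤ) : ℝ) < 2 * exp (2 * s) + 1 := by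
  set A := exp (tileRow s z * s)
  have hA : 0 < s * A := by positivity
  have hre : |z.re / (s * A) - w.re / (s * A)| < (exp (2 * s) - 1) / s := by
    rw [← sub_div, abs_div, abs_of_pos hA, div_lt_div_iff₀ hA hs]
    nlinarith [abs_re_sub_lt_of_tileRow_eq hs hrow h]
  have hexp : (exp (2 * s) - 1) / s ≤ 2 * exp (2 * s) := by
    rw [div_le_iff₀ hs]
    nlinarith [add_one_le_exp (-(2 * s)), exp_pos (2 * s), exp_neg (2 * s),
      mul_inv_cancel₀ (exp_pos (2 * s)).ne']
  have hfloor := Int.abs_floor_sub_floor_lt (z.re / (s * A)) (w.re / (s * A))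
  push_cast at hfloor ⊢
  unfold tileCol
  rw [← hrow]
  linarith

lemma dist_lt_of_tileRow_eq_of_tileCol_eq (hs : 0 < s) {z w : ℍ}
    (hrow : tileRow s z = tileRow s w) (hcol : tileCol s z = tileCol s w) : dist z w < 2 * s := by
  unfold tileCol at hcol
  rw [← hrow] at hcol
  set A := exp (tileRow s z * s)
  have hsA : 0 < s * A := by positivity
  have hre : |z.re - w.re| / z.im < s := by
    have := Int.abs_sub_lt_one_of_floor_eq_floor hcol
    rw [← sub_div, abs_div, abs_of_pos hsA, div_lt_one hsA] at this
    rw [div_lt_iff₀ z.im_pos]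
    nlinarith [exp_tileRow_le_im hs z]
  have hlog : |log z.im - log w.im| < s := by
    have := Int.abs_sub_lt_one_of_floor_eq_floor hrow
    rwa [← sub_div, abs_div, abs_of_pos hs, div_lt_one hs] at this
  linarith [dist_le_abs_re_sub_re_div_im_add z w]

end UpperHalfPlane

theorem colorable_distGraph_upperHalfPlane {d : ℝ} (hd : 0 < d) :
    (distGraph ℍ d).Colorable (3 * (⌈2 * exp d⌉₊ + 1)) := by
  have hs : 0 < d / 2 := half_pos hd
  have hd2 : d = 2 * (d / 2) := by ring
  refine SimpleGraph.colorable_mul_of_abs_sub_lt (tileRow (d / 2)) (tileCol (d / 2)) ?_ ?_ ?_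
  · rintro z w ⟨-, hzw⟩
    exact_mod_cast abs_tileRow_sub_lt hs (hzw.trans hd2).le
  · rintro z w ⟨-, hzw⟩ hrow
    have hcol := abs_tileCol_sub_lt hs hrow (hzw.trans hd2).le
    rw [← hd2] at hcol
    have : ((|tileCol (d / 2) z - tileCol (d / 2) w| : ℤ) : ℝ) < (⌈2 * exp d⌉₊ + 1 : ℕ) := by
      push_cast at hcol ⊢
      linarith [Nat.le_ceil (2 * exp d)]
    exact_mod_cast this
  · rintro z w ⟨-, hzw⟩ hrow hcol
    exact (dist_lt_of_tileRow_eq_of_tileCol_eq hs hrow hcol).ne (hzw.trans hd2)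

/-- There is a constant `C > 0` such that for every `d > 0` the `d`-chromatic number of the
hyperbolic plane is at most `C * e^d`. -/
theorem upperHalfPlane_chromatic_le_exp :
    ∃ C : ℝ, 0 < C ∧ ∀ d : ℝ, 0 < d →
      ((distGraph UpperHalfPlane d).chromaticNumber : ℝ≥0∞) ≤
        ENNReal.ofReal (C * Real.exp d) := by
  refine ⟨12, by norm_num, fun d hd => ?_⟩
  have hχ := (colorable_distGraph_upperHalfPlane hd).chromaticNumber_le
  have hceil := Nat.ceil_lt_add_one (by positivity : 0 ≤ 2 * exp d)
  have hexp := one_le_exp hd.le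
  calc ((distGraph UpperHalfPlane d).chromaticNumber : ℝ≥0∞)
      ≤ ((3 * (⌈2 * exp d⌉₊ + 1) : ℕ) : ℝ≥0∞) := by exact_mod_cast hχ
    _ = ENNReal.ofReal ((3 * (⌈2 * exp d⌉₊ + 1) : ℕ) : ℝ) := (ENNReal.ofReal_natCast _).symm
    _ ≤ ENNReal.ofReal (12 * exp d) := by
      gcongr
      push_cast
      linarith
end

section
/- Let d > 0 and r > 0 be real numbers with 5r ≤ 2d, let x be a point of the hyperbolic plane ℍ, and let Y ⊆ ℍ be a set of points such that any two distinct points of Y are at distance greater than r, and every y ∈ Y satisfies d − 2r ≤ dist(x, y) ≤ d + 2r. Then Y is finite and its cardinality is at most sinh(5r/2) · sinh(d) / sinh²(r/4). -/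
open Real MeasureTheory Set Metric
open scoped ENNReal NNReal

/-!
The balls of radius `r / 2` around the points of `Y` are pairwise disjoint and lie in the
annulus `ball x (d + 5r/2) \ ball x (d - 5r/2)`, so the number of points is at most the ratio
of the hyperbolic areas. A hyperbolic ball of radius `ρ` around `z` is the Euclidean disc of
centre `z.re + i z.im cosh ρ` and radius `z.im sinh ρ`; integrating `dx dy / y²` over it slice
by slice gives the area `2π (cosh ρ - 1)`.
-/

section ChordIntegral

variable {c R y : ℝ}

theorem hasDerivAt_sqrt_sub_sq_div (hy : |y - c| < R) (hy0 : y ≠ 0) :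
    HasDerivAt (fun y => √(R ^ 2 - (y - c) ^ 2) / y)
      (-(y - c) / (y * √(R ^ 2 - (y - c) ^ 2)) - √(R ^ 2 - (y - c) ^ 2) / y ^ 2) y := by
  have hQ : 0 < R ^ 2 - (y - c) ^ 2 := by nlinarith [abs_nonneg (y - c), sq_abs (y - c)]
  have hQ' : HasDerivAt (fun y => R ^ 2 - (y - c) ^ 2) (-(2 * (y - c))) y := by
    simpa using (((hasDerivAt_id' y).sub_const c).pow 2).const_sub (R ^ 2)
  refine (((Real.hasDerivAt_sqrt hQ.ne').comp y hQ').div (hasDerivAt_id' y) hy0).congr_deriv ?_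
  have := (Real.sqrt_pos.2 hQ).ne'
  simp only [Function.comp_apply]
  field_simp

theorem hasDerivAt_arcsin_sub_div (hy : |y - c| < R) :
    HasDerivAt (fun y => arcsin ((y - c) / R)) (1 / √(R ^ 2 - (y - c) ^ 2)) y := by
  have hR : 0 < R := (abs_nonneg _).trans_lt hy
  obtain ⟨h1, h2⟩ := abs_lt.1 hy
  have hu : HasDerivAt (fun y => (y - c) / R) (1 / R) y := by
    simpa using ((hasDerivAt_id' y).sub_const c).div_const R
  refine ((Real.hasDerivAt_arcsin (by rw [ne_eq, div_eq_iff hR.ne']; linarith)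
    (by rw [ne_eq, div_eq_iff hR.ne']; linarith)).comp y hu).congr_deriv ?_
  rw [show 1 - ((y - c) / R) ^ 2 = (R ^ 2 - (y - c) ^ 2) / R ^ 2 by field_simp,
    Real.sqrt_div' _ (sq_nonneg R), Real.sqrt_sq hR.le]
  field_simp

theorem hasDerivAt_arcsin_mobius (hRc : R < c) (hy : |y - c| < R) :
    HasDerivAt (fun y => arcsin ((R ^ 2 + c * (y - c)) / (R * y)))
      (√(c ^ 2 - R ^ 2) / (y * √(R ^ 2 - (y - c) ^ 2))) y := by
  have hR : 0 < R := (abs_nonneg _).trans_lt hy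
  obtain ⟨h1, h2⟩ := abs_lt.1 hy
  have hy0 : 0 < y := by linarith
  have hQ : 0 < R ^ 2 - (y - c) ^ 2 := by nlinarith
  have hφ : HasDerivAt (fun y => (R ^ 2 + c * (y - c)) / (R * y))
      ((c ^ 2 - R ^ 2) / (R * y ^ 2)) y := by
    refine (((((hasDerivAt_id' y).sub_const c).const_mul c).const_add (R ^ 2)).div
      ((hasDerivAt_id' y).const_mul R) (by positivity)).congr_deriv ?_
    field_simp
    ring
  have hsq : 1 - ((R ^ 2 + c * (y - c)) / (R * y)) ^ 2
      = (c ^ 2 - R ^ 2) * (R ^ 2 - (y - c) ^ 2) / (R * y) ^ 2 := by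
    field_simp
    ring
  have hlt : ((R ^ 2 + c * (y - c)) / (R * y)) ^ 2 < 1 := by
    have : 0 < (c ^ 2 - R ^ 2) * (R ^ 2 - (y - c) ^ 2) / (R * y) ^ 2 := by
      have : 0 < c ^ 2 - R ^ 2 := by nlinarith
      positivity
    linarith
  obtain ⟨hφ1, hφ2⟩ := abs_lt.1 ((sq_lt_one_iff_abs_lt_one _).1 hlt)
  refine ((Real.hasDerivAt_arcsin hφ1.ne' hφ2.ne).comp y hφ).congr_deriv ?_
  rw [hsq, Real.sqrt_div' _ (sq_nonneg _), Real.sqrt_sq (by positivity), Real.sqrt_mul' _ hQ.le]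
  have : 0 < c ^ 2 - R ^ 2 := by nlinarith
  have := (Real.sqrt_pos.2 this).ne'
  have := (Real.sqrt_pos.2 hQ).ne'
  field_simp
  rw [Real.sq_sqrt (by positivity)]

-- One integration by parts reduces `∫ √(R² - (y - c)²) / y²` to `∫ dy / √(R² - (y - c)²)` and
-- `∫ dy / (y √(R² - (y - c)²))`, whose primitives are the two arcsines.
theorem hasDerivAt_antideriv_sqrt_sub_sq_div_sq (hRc : R < c) (hy : |y - c| < R) :
    HasDerivAt (fun y => -2 * (√(R ^ 2 - (y - c) ^ 2) / y) - 2 * arcsin ((y - c) / R)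
        + 2 * c / √(c ^ 2 - R ^ 2) * arcsin ((R ^ 2 + c * (y - c)) / (R * y)))
      (2 * √(R ^ 2 - (y - c) ^ 2) / y ^ 2) y := by
  have hR : 0 < R := (abs_nonneg _).trans_lt hy
  have hy0 : 0 < y := by linarith [(abs_lt.1 hy).1]
  refine ((((hasDerivAt_sqrt_sub_sq_div hy hy0.ne').const_mul (-2)).sub
    ((hasDerivAt_arcsin_sub_div hy).const_mul 2)).add
    ((hasDerivAt_arcsin_mobius hRc hy).const_mul _)).congr_deriv ?_
  have := (Real.sqrt_pos.2 (by nlinarith : 0 < c ^ 2 - R ^ 2)).ne'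
  have := (Real.sqrt_pos.2 (by nlinarith [abs_nonneg (y - c), sq_abs (y - c)] :
    0 < R ^ 2 - (y - c) ^ 2)).ne'
  field_simp
  ring

theorem intervalIntegrable_sqrt_sub_sq_div_sq (hR : 0 ≤ R) (hRc : R < c) :
    IntervalIntegrable (fun y => 2 * √(R ^ 2 - (y - c) ^ 2) / y ^ 2) volume (c - R) (c + R) := by
  have hpos : ∀ y ∈ Icc (c - R) (c + R), y ≠ 0 := fun y hy => by linarith [hy.1]
  exact ContinuousOn.intervalIntegrable_of_Icc (by linarith)
    (by fun_prop (disch := intro y hy; simp [hpos y hy]))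

theorem integral_sqrt_sub_sq_div_sq (hR : 0 < R) (hRc : R < c) :
    ∫ y in (c - R)..(c + R), 2 * √(R ^ 2 - (y - c) ^ 2) / y ^ 2
      = 2 * π * (c / √(c ^ 2 - R ^ 2) - 1) := by
  have hpos : ∀ y ∈ Icc (c - R) (c + R), y ≠ 0 := fun y hy => by linarith [hy.1]
  rw [intervalIntegral.integral_eq_sub_of_hasDerivAt_of_le (by linarith)
    (by fun_prop (disch := intro y hy; simp [hpos y hy, hR.ne']))
    (fun y hy => hasDerivAt_antideriv_sqrt_sub_sq_div_sq hRc
      (abs_lt.2 ⟨by linarith [hy.1], by linarith [hy.2]⟩))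
    (intervalIntegrable_sqrt_sub_sq_div_sq hR.le hRc)]
  have e1 : (R ^ 2 + c * R) / (R * (c + R)) = 1 := by
    rw [div_eq_one_iff_eq (by nlinarith)]; ring
  have e2 : (R ^ 2 + c * -R) / (R * (c - R)) = -1 := by
    rw [div_eq_iff (by nlinarith)]; ring
  simp only [e1, e2, add_sub_cancel_left, sub_sub_cancel_left, neg_sq, sub_self, div_self hR.ne',
    neg_div, Real.sqrt_zero, zero_div, Real.arcsin_one, Real.arcsin_neg_one]
  field_simp
  ring

end ChordIntegral

theorem Complex.preimage_mk_ball (c : ℂ) {R : ℝ} (hR : 0 ≤ R) (y : ℝ) :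
    (fun x : ℝ => (⟨x, y⟩ : ℂ)) ⁻¹' ball c R = ball c.re √(R ^ 2 - (y - c.im) ^ 2) := by
  ext x
  rw [mem_preimage, mem_ball, mem_ball, Complex.dist_eq_re_im, Real.dist_eq,
    Real.sqrt_lt (by positivity) hR, Real.lt_sqrt (abs_nonneg _), sq_abs]
  constructor <;> intro h <;> linarith

theorem Complex.setLIntegral_ball_comp_im (c : ℂ) {R : ℝ} (hR : 0 ≤ R) {g : ℝ → ℝ≥0∞}
    (hg : Measurable g) :
    ∫⁻ z in ball c R, g z.im = ∫⁻ y, ENNReal.ofReal (2 * √(R ^ 2 - (y - c.im) ^ 2)) * g y := by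
  rw [← lintegral_indicator measurableSet_ball,
    ← Complex.volume_preserving_equiv_real_prod.symm.lintegral_comp_emb
      Complex.measurableEquivRealProd.symm.measurableEmbedding,
    Measure.volume_eq_prod, lintegral_prod_symm']
  · congr 1 with y
    simp only [Complex.measurableEquivRealProd_symm_apply]
    rw [← lintegral_congr fun x => indicator_comp_right (s := ball c R) (g := fun z => g z.im)
      (fun x : ℝ => (⟨x, y⟩ : ℂ)) (x := x), Complex.preimage_mk_ball c hR y]
    exact (lintegral_indicator_const measurableSet_ball (g y)).trans
      (by rw [Real.volume_ball, mul_comm])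
  · exact ((hg.comp Complex.measurable_im).indicator measurableSet_ball).comp
      Complex.measurableEquivRealProd.symm.measurable

theorem ENNReal.coe_one_div_nnnorm_sq (y : ℝ) :
    (((1 / ‖y‖₊) ^ 2 : ℝ≥0) : ℝ≥0∞) = ENNReal.ofReal (1 / y ^ 2) := by
  rw [← ENNReal.ofReal_coe_nnreal]
  congr 1
  push_cast
  rw [Real.norm_eq_abs, div_pow, sq_abs, one_pow]

theorem Complex.setLIntegral_ball_inv_im_sq (c : ℂ) {R : ℝ} (hR : 0 ≤ R) (hRc : R < c.im) :
    ∫⁻ z in ball c R, (((1 / ‖z.im‖₊) ^ 2 : ℝ≥0) : ℝ≥0∞)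
      = ENNReal.ofReal (2 * π * (c.im / √(c.im ^ 2 - R ^ 2) - 1)) := by
  obtain rfl | hR := hR.eq_or_lt
  · simp [Real.sqrt_sq hRc.le, div_self hRc.ne']
  have hchord : ∀ y, ENNReal.ofReal (2 * √(R ^ 2 - (y - c.im) ^ 2)) * ((1 / ‖y‖₊) ^ 2 : ℝ≥0)
      = (Ioc (c.im - R) (c.im + R)).indicator
          (fun y => ENNReal.ofReal (2 * √(R ^ 2 - (y - c.im) ^ 2) / y ^ 2)) y := by
    intro y
    by_cases hy : y ∈ Ioc (c.im - R) (c.im + R)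
    · rw [indicator_of_mem hy, ENNReal.coe_one_div_nnnorm_sq,
        ← ENNReal.ofReal_mul (by positivity), mul_one_div]
    · rw [indicator_of_notMem hy, Real.sqrt_eq_zero'.2, mul_zero, ENNReal.ofReal_zero, zero_mul]
      rw [mem_Ioc, not_and_or, not_lt, not_le] at hy
      rcases hy with hy | hy <;> nlinarith
  rw [Complex.setLIntegral_ball_comp_im c hR.le
      (g := fun y => (((1 / ‖y‖₊) ^ 2 : ℝ≥0) : ℝ≥0∞)) (by fun_prop), lintegral_congr hchord,
    lintegral_indicator measurableSet_Ioc, ← ofReal_integral_eq_lintegral_ofReal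
      (intervalIntegrable_sqrt_sub_sq_div_sq hR.le hRc).1 (ae_of_all _ fun y => by positivity),
    ← intervalIntegral.integral_of_le (by linarith), integral_sqrt_sub_sq_div_sq hR hRc]

theorem Real.cosh_add_sub_cosh_sub (x y : ℝ) :
    cosh (x + y) - cosh (x - y) = 2 * sinh x * sinh y := by
  rw [cosh_add, cosh_sub]
  ring

theorem Real.cosh_sub_one_eq_two_mul_sinh_half_sq (x : ℝ) : cosh x - 1 = 2 * sinh (x / 2) ^ 2 := by
  rw [← mul_div_cancel₀ x two_ne_zero, cosh_two_mul, cosh_sq, mul_div_cancel₀ x two_ne_zero]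
  ring

namespace UpperHalfPlane

theorem volume_ball (z : ℍ) {ρ : ℝ} (hρ : 0 ≤ ρ) :
    volume (ball z ρ) = ENNReal.ofReal (2 * π * (cosh ρ - 1)) := by
  have hradius : z.im * sinh ρ < (z.center ρ : ℂ).im := by
    rw [coe_im, center_im]
    exact mul_lt_mul_of_pos_left (sinh_lt_cosh ρ) z.im_pos
  rw [volume_eq_lintegral, image_coe_ball,
    Complex.setLIntegral_ball_inv_im_sq _ (by positivity) hradius, coe_im, center_im,
    mul_pow, mul_pow, ← mul_sub, cosh_sq', add_sub_cancel_right, mul_one,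
    Real.sqrt_sq z.im_pos.le, mul_div_cancel_left₀ _ z.im_ne_zero]

theorem volume_ball_diff_ball (z : ℍ) {ρ₁ ρ₂ : ℝ} (h₀ : 0 ≤ ρ₁) (h₁₂ : ρ₁ ≤ ρ₂) :
    volume (ball z ρ₂ \ ball z ρ₁) = ENNReal.ofReal (2 * π * (cosh ρ₂ - cosh ρ₁)) := by
  rw [measure_sdiff (ball_subset_ball h₁₂) measurableSet_ball.nullMeasurableSet
      (by rw [volume_ball z h₀]; exact ENNReal.ofReal_ne_top),
    volume_ball z h₀, volume_ball z (h₀.trans h₁₂),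
    ← ENNReal.ofReal_sub _ (by nlinarith [pi_pos, one_le_cosh ρ₁])]
  congr 1
  ring

end UpperHalfPlane

theorem Metric.pairwiseDisjoint_ball_of_pairwise_le_dist {α : Type*} [PseudoMetricSpace α]
    {s : Set α} {r : ℝ} (h : s.Pairwise fun x y => r ≤ dist x y) :
    s.PairwiseDisjoint fun x => ball x (r / 2) :=
  fun x hx y hy hxy => ball_disjoint_ball (by linarith [h hx hy hxy])

theorem Metric.ball_subset_ball_diff_ball {α : Type*} [PseudoMetricSpace α] {x y : α}
    {a b ε : ℝ} (ha : a ≤ dist x y) (hb : dist x y ≤ b) :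
    ball y ε ⊆ ball x (b + ε) \ ball x (a - ε) :=
  subset_sdiff.2 ⟨ball_subset_ball' (by rw [dist_comm]; linarith),
    ball_disjoint_ball (by rw [dist_comm]; linarith)⟩

theorem MeasureTheory.encard_mul_le_measure_of_pairwiseDisjoint {ι α : Type*}
    [MeasurableSpace α] (μ : Measure α) {s : Set ι} {B : ι → Set α} {E : Set α} {c : ℝ≥0∞}
    (hdisj : s.PairwiseDisjoint B) (hmeas : ∀ i ∈ s, MeasurableSet (B i))
    (hsub : ∀ i ∈ s, B i ⊆ E) (hc : ∀ i ∈ s, c ≤ μ (B i)) :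
    (s.encard : ℝ≥0∞) * c ≤ μ E :=
  calc (s.encard : ℝ≥0∞) * c = ∑' _ : s, c := (ENNReal.tsum_const c).symm
    _ ≤ ∑' i : s, μ (B i) := ENNReal.tsum_le_tsum fun i => hc i i.2
    _ ≤ μ (⋃ i : s, B i) :=
      tsum_meas_le_meas_iUnion_of_disjoint μ (fun i => hmeas i i.2) hdisj.subtype
    _ ≤ μ E := measure_mono (iUnion_subset fun i => hsub i i.2)

theorem Set.finite_and_ncard_le_of_encard_mul_le {α : Type*} {s : Set α} {a A : ℝ} (ha : 0 < a)
    (hA : 0 ≤ A) (h : (s.encard : ℝ≥0∞) * ENNReal.ofReal a ≤ ENNReal.ofReal A) :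
    s.Finite ∧ (s.ncard : ℝ) ≤ A / a := by
  have hfin : s.Finite := by
    by_contra hinf
    simp [encard_eq_top_iff.2 hinf, ha] at h
  refine ⟨hfin, (le_div_iff₀ ha).2 ?_⟩
  rwa [← hfin.cast_ncard_eq, ENat.toENNReal_coe, ← ENNReal.ofReal_natCast,
    ← ENNReal.ofReal_mul (by positivity), ENNReal.ofReal_le_ofReal_iff hA] at h

theorem upperHalfPlane_annulus_packing_general (d r : ℝ) (hr : 0 < r)
    (hrd : 5 * r ≤ 2 * d) (x : UpperHalfPlane) (Y : Set UpperHalfPlane)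
    (hsep : ∀ y ∈ Y, ∀ z ∈ Y, y ≠ z → r < dist y z)
    (hann : ∀ y ∈ Y, d - 2 * r ≤ dist x y ∧ dist x y ≤ d + 2 * r) :
    Y.Finite ∧
      (Y.ncard : ℝ) ≤ Real.sinh (5 * r / 2) * Real.sinh d / (Real.sinh (r / 4)) ^ 2 := by
  have hpack := encard_mul_le_measure_of_pairwiseDisjoint volume
    (pairwiseDisjoint_ball_of_pairwise_le_dist fun y hy z hz hyz => (hsep y hy z hz hyz).le)
    (fun y _ => measurableSet_ball)
    (fun y hy => ball_subset_ball_diff_ball (hann y hy).1 (hann y hy).2)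
    (fun y _ => (UpperHalfPlane.volume_ball y (by positivity : 0 ≤ r / 2)).ge)
  have hd : 0 < d := by linarith
  have hannulus : cosh (d + 2 * r + r / 2) - cosh (d - 2 * r - r / 2)
      = 2 * sinh d * sinh (5 * r / 2) := by
    rw [← cosh_add_sub_cosh_sub]; ring_nf
  rw [UpperHalfPlane.volume_ball_diff_ball x (by linarith) (by linarith), hannulus,
    cosh_sub_one_eq_two_mul_sinh_half_sq, div_div, show r / (2 * 2) = r / 4 by ring] at hpack
  refine (finite_and_ncard_le_of_encard_mul_le (by positivity) (by positivity) hpack).imp_right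
    (le_of_le_of_eq · ?_)
  field_simp

/-- Packing bound in the hyperbolic plane: if the points of `Y` are pairwise at distance
greater than `r` and all lie in the annulus of radii `d - 2r` and `d + 2r` around `x`
(with `5r ≤ 2d`), then `Y` is finite of cardinality at most
`sinh(5r/2) * sinh(d) / sinh²(r/4)`. -/
theorem upperHalfPlane_annulus_packing (d r : ℝ) (hd : 0 < d) (hr : 0 < r)
    (hrd : 5 * r ≤ 2 * d) (x : UpperHalfPlane) (Y : Set UpperHalfPlane)
    (hsep : ∀ y ∈ Y, ∀ z ∈ Y, y ≠ z → r < dist y z)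
    (hann : ∀ y ∈ Y, d - 2 * r ≤ dist x y ∧ dist x y ≤ d + 2 * r) :
    Y.Finite ∧
      (Y.ncard : ℝ) ≤ Real.sinh (5 * r / 2) * Real.sinh d / (Real.sinh (r / 4)) ^ 2 :=
  upperHalfPlane_annulus_packing_general d r hr hrd x Y hsep hann
end

section
/- Let E = EuclideanSpace ℝ (Fin n), let Λ be a ℤ-lattice in E (a discrete subgroup spanning E over ℝ), and let T = E ⧸ Λ be the flat torus equipped with the quotient norm (quotient metric). Then the chromatic number of T is at least the 1-chromatic number of E: sup{χ(T, d) : d > 0} ≥ χ(E, 1). -/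
namespace distGraph

variable {X Y : Type*} [PseudoMetricSpace X] [PseudoMetricSpace Y]

def homOfDistEq {r s : ℝ} (f : X → Y) (hs : s ≠ 0)
    (hf : ∀ a b, dist a b = r → dist (f a) (f b) = s) : distGraph X r →g distGraph Y s where
  toFun := f
  map_rel' := by
    rintro a b ⟨-, hab⟩
    have hfab := hf a b hab
    refine ⟨fun h ↦ hs ?_, hfab⟩
    rw [← hfab, h, dist_self]

end distGraph

variable {M : Type*} [SeminormedAddCommGroup M]

theorem AddSubgroup.exists_pos_le_norm_of_discreteTopology (S : AddSubgroup M)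
    [DiscreteTopology S] : ∃ r > 0, ∀ v ∈ S, v ≠ 0 → r ≤ ‖v‖ := by
  obtain ⟨r, hr, hS⟩ := Metric.isOpen_singleton_iff.1 (isOpen_discrete ({0} : Set S))
  refine ⟨r, hr, fun v hv hv0 ↦ not_lt.1 fun hlt ↦ hv0 ?_⟩
  exact congrArg Subtype.val (hS ⟨v, hv⟩ (by simpa [Subtype.dist_eq] using hlt))

theorem QuotientAddGroup.norm_mk_eq_norm_of_two_mul_le {S : AddSubgroup M} {z : M}
    (h : ∀ v ∈ S, v ≠ 0 → 2 * ‖z‖ ≤ ‖v‖) : ‖(z : M ⧸ S)‖ = ‖z‖ := by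
  refine le_antisymm norm_mk_le_norm (le_norm_iff.2 fun m hm ↦ ?_)
  have hmem : m - z ∈ S := QuotientAddGroup.eq_iff_sub_mem.1 hm
  rcases eq_or_ne (m - z) 0 with hmz | hmz
  · rw [sub_eq_zero.1 hmz]
  · linarith [h _ hmem hmz, norm_sub_le m z]

theorem QuotientAddGroup.exists_pos_dist_mk_eq_dist_of_discreteTopology (S : AddSubgroup M)
    [DiscreteTopology S] : ∃ r > 0, ∀ a b : M, dist a b ≤ r → dist (a : M ⧸ S) b = dist a b := by
  obtain ⟨r, hr, hS⟩ := S.exists_pos_le_norm_of_discreteTopology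
  refine ⟨r / 2, half_pos hr, fun a b hab ↦ ?_⟩
  rw [dist_eq_norm, dist_eq_norm, ← QuotientAddGroup.mk_sub]
  refine norm_mk_eq_norm_of_two_mul_le fun v hv hv0 ↦ ?_
  linarith [hS v hv hv0, dist_eq_norm a b]

theorem flatTorus_chromatic_ge_general (n : ℕ) (Λ : Submodule ℤ (EuclideanSpace ℝ (Fin n)))
    [DiscreteTopology Λ] :
    (distGraph (EuclideanSpace ℝ (Fin n)) 1).chromaticNumber ≤
      ⨆ d ∈ Set.Ioi (0 : ℝ),
        (distGraph ((EuclideanSpace ℝ (Fin n)) ⧸ Λ.toAddSubgroup) d).chromaticNumber := by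
  have : DiscreteTopology Λ.toAddSubgroup := ‹DiscreteTopology Λ›
  obtain ⟨r, hr, hloc⟩ :=
    QuotientAddGroup.exists_pos_dist_mk_eq_dist_of_discreteTopology Λ.toAddSubgroup
  have hscale : ∀ a b : EuclideanSpace ℝ (Fin n), dist a b = 1 →
      dist ((r • a : EuclideanSpace ℝ (Fin n)) : _ ⧸ Λ.toAddSubgroup) (r • b : _) = r := by
    intro a b hab
    have hdist : dist (r • a) (r • b) = r := by
      rw [dist_smul₀, hab, Real.norm_of_nonneg hr.le, mul_one]
    rw [hloc _ _ hdist.le, hdist]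
  refine le_trans ?_ (le_biSup _ (show r ∈ Set.Ioi 0 from hr))
  exact SimpleGraph.chromaticNumber_mono_of_hom (distGraph.homOfDistEq _ hr.ne' hscale)

/-- For a `ℤ`-lattice `Λ` in Euclidean space `E`, the chromatic number
`sup {χ(E ⧸ Λ, d) : d > 0}` of the flat torus `E ⧸ Λ` (with the quotient norm) is at least
the `1`-chromatic number of `E`. -/
theorem flatTorus_chromatic_ge (n : ℕ) (Λ : Submodule ℤ (EuclideanSpace ℝ (Fin n)))
    [DiscreteTopology Λ] [IsZLattice ℝ Λ] :
    (distGraph (EuclideanSpace ℝ (Fin n)) 1).chromaticNumber ≤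
      ⨆ d ∈ Set.Ioi (0 : ℝ),
        (distGraph ((EuclideanSpace ℝ (Fin n)) ⧸ Λ.toAddSubgroup) d).chromaticNumber :=
  flatTorus_chromatic_ge_general n Λ
end

section
/- Let s and x be real numbers with 0 < x ≤ s ≤ 1/√2. Then arcsinh(1/x) − arccosh(s/x) > (log 2)/2. -/
/-- The inverse hyperbolic cosine of a real number (for `x ≥ 1`). -/
noncomputable def arccosh (x : ℝ) : ℝ := Real.log (x + Real.sqrt (x ^ 2 - 1))

/-! Both terms are logarithms of quotients with the common denominator `x`:
`arsinh (1/x) = log ((1 + √(1 + x²)) / x)` and `arccosh (s/x) = log ((s + √(s² - x²)) / x)`.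
Their difference is therefore `log ((1 + √(1 + x²)) / (s + √(s² - x²)))`, and the quotient exceeds `√2`
because `√2 s ≤ 1` and `2 (s² - x²) ≤ 1 - 2x² < 1 + x²`. -/

open Real

lemma arsinh_one_div {x : ℝ} (hx : 0 < x) :
    arsinh (1 / x) = log (1 + √(1 + x ^ 2)) - log x := by
  have hsqrt : √(1 + (1 / x) ^ 2) = √(1 + x ^ 2) / x := by
    rw [show 1 + (1 / x) ^ 2 = (1 + x ^ 2) / x ^ 2 by field_simp; ring,
      sqrt_div (by positivity), sqrt_sq hx.le]
  rw [arsinh, hsqrt, ← add_div, log_div (by positivity) hx.ne']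

lemma arccosh_div {s x : ℝ} (hx : 0 < x) (hs : 0 < s) :
    arccosh (s / x) = log (s + √(s ^ 2 - x ^ 2)) - log x := by
  have hsqrt : √((s / x) ^ 2 - 1) = √(s ^ 2 - x ^ 2) / x := by
    rw [show (s / x) ^ 2 - 1 = (s ^ 2 - x ^ 2) / x ^ 2 by field_simp,
      sqrt_div' _ (by positivity), sqrt_sq hx.le]
  rw [arccosh, hsqrt, ← add_div, log_div (by positivity) hx.ne']

lemma sqrt_two_mul_add_sqrt_sub_lt {s x : ℝ} (hx : x ≠ 0) (hs : 2 * s ^ 2 ≤ 1) :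
    √2 * (s + √(s ^ 2 - x ^ 2)) < 1 + √(1 + x ^ 2) := by
  have hx2 : 0 < x ^ 2 := by positivity
  have hs' : √2 * s ≤ 1 := by
    by_contra! h
    nlinarith [sq_sqrt (zero_le_two : (0 : ℝ) ≤ 2)]
  have hsqrt : √2 * √(s ^ 2 - x ^ 2) < √(1 + x ^ 2) := by
    rw [← sqrt_mul zero_le_two, sqrt_lt_sqrt_iff_of_pos (by positivity)]
    linarith
  linarith [mul_add (√2) s (√(s ^ 2 - x ^ 2)), one_le_sqrt.mpr (by linarith : 1 ≤ 1 + x ^ 2)]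

/-- For `0 < x ≤ s ≤ 1/√2`, one has `arcsinh (1/x) - arccosh (s/x) > (log 2)/2`. -/
theorem arsinh_sub_arccosh_gt (s x : ℝ) (hx0 : 0 < x) (hxs : x ≤ s)
    (hs : s ≤ 1 / Real.sqrt 2) :
    Real.log 2 / 2 < Real.arsinh (1 / x) - arccosh (s / x) := by
  have hs0 : 0 < s := hx0.trans_le hxs
  have hs2 : 2 * s ^ 2 ≤ 1 := by
    have := pow_le_pow_left₀ hs0.le hs 2
    rw [div_pow, sq_sqrt zero_le_two] at this
    linarith
  have hsum : 0 < s + √(s ^ 2 - x ^ 2) := by positivity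
  have hlog : log √2 + log (s + √(s ^ 2 - x ^ 2)) < log (1 + √(1 + x ^ 2)) := by
    rw [← log_mul (by positivity) hsum.ne']
    exact log_lt_log (by positivity) (sqrt_two_mul_add_sqrt_sub_lt hx0.ne' hs2)
  rw [arsinh_one_div hx0, arccosh_div hx0 hs0, ← log_sqrt zero_le_two]
  linarith
end
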